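/- arXiv:2206.08240 — 2 statements merged into one kernel-verified Lean document; each statement's English description precedes it below -/
import Mathlib

section
/- Let H be a real Hilbert space, A : H → H monotone and L-Lipschitz, B maximal monotone, z ∈ (A+B)⁻¹(0), μ ∈ [δ, (1-2δ)/(2L)] with δ ∈ (0,1/2), and (v_n) generated by v_{n+1} = (I+μB)⁻¹(v_n - μ(2Av_n - Av_{n-1})). Then Σ_{j=1}^n ‖v_{j+1} - v_j‖² ≤ (2/δ)[½‖z - v_1‖² + μ⟨Av_1 - Av_0, z - v_1⟩ + ¼‖v_1 - v_0‖²] for all n ≥ 1; consequently min_{1≤j≤n} ‖v_{j+1} - v_j‖ = O(1/√n). -/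
/-! With `s_n = ½‖z - v_n‖² + μ⟪Av_n - Av_{n-1}, z - v_n⟫ + ¼‖v_n - v_{n-1}‖²`, monotonicity of `B`
and of `A` at the pair `(v_{n+1}, z)`, together with Young's inequality for the reflected term
`μ⟪Av_n - Av_{n-1}, v_{n+1} - v_n⟫` and `μL ≤ ½ - δ`, give
`s_{n+1} + (δ/2)‖v_{n+1} - v_n‖² ≤ s_n`; the same Young bound shows `s_n ≥ 0`. Telescoping bounds
`∑ ‖v_{j+1} - v_j‖²` by `(2/δ) s_1`, and the smallest of `n` terms is at most their mean. -/

open Finset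

namespace Finset

lemma sum_Icc_le_sub_of_le_sub {a s : ℕ → ℝ} {m n : ℕ} (hmn : m ≤ n)
    (h : ∀ j ∈ Icc m n, a j ≤ s j - s (j + 1)) : ∑ j ∈ Icc m n, a j ≤ s m - s (n + 1) :=
  (sum_le_sum h).trans_eq <| by simpa only [neg_sub_neg] using sum_Icc_sub hmn fun j => -s j

lemma exists_le_sqrt_div_of_sum_sq_le {ι : Type*} {s : Finset ι} {a : ι → ℝ} {M : ℝ}
    (hs : s.Nonempty) (h : ∑ j ∈ s, a j ^ 2 ≤ M) : ∃ j ∈ s, a j ≤ √M / √(#s : ℝ) := by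
  have hsum : ∑ j ∈ s, a j ^ 2 ≤ ∑ _j ∈ s, M / #s := by
    rw [sum_const, nsmul_eq_mul, mul_div_cancel₀ _ (by positivity)]
    exact h
  obtain ⟨j, hj, hle⟩ := exists_le_of_sum_le hs hsum
  exact ⟨j, hj, ((le_abs_self _).trans (Real.abs_le_sqrt hle)).trans_eq
    (Real.sqrt_div' _ (Nat.cast_nonneg _))⟩

end Finset

section ForwardReflectedBackward

open RealInnerProductSpace

variable {H : Type*} [NormedAddCommGroup H] [InnerProductSpace ℝ H]

lemma neg_mul_inner_le_of_norm_le {μ L : ℝ} {r e c : H} (hμ : 0 ≤ μ) (hL : 0 ≤ L)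
    (hr : ‖r‖ ≤ L * ‖e‖) : -(μ * ⟪r, c⟫) ≤ μ * L / 2 * (‖e‖ ^ 2 + ‖c‖ ^ 2) := by
  have hrc : -⟪r, c⟫ ≤ L * ‖e‖ * ‖c‖ :=
    calc -⟪r, c⟫ ≤ ‖r‖ * ‖c‖ := (neg_le_abs _).trans (abs_real_inner_le_norm r c)
      _ ≤ L * ‖e‖ * ‖c‖ := by gcongr
  have amgm : ‖e‖ * ‖c‖ ≤ (‖e‖ ^ 2 + ‖c‖ ^ 2) / 2 := by nlinarith [sq_nonneg (‖e‖ - ‖c‖)]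
  calc -(μ * ⟪r, c⟫) = μ * -⟪r, c⟫ := by ring
    _ ≤ μ * (L * ‖e‖ * ‖c‖) := by gcongr
    _ = μ * L * (‖e‖ * ‖c‖) := by ring
    _ ≤ μ * L * ((‖e‖ ^ 2 + ‖c‖ ^ 2) / 2) := mul_le_mul_of_nonneg_left amgm (mul_nonneg hμ hL)
    _ = μ * L / 2 * (‖e‖ ^ 2 + ‖c‖ ^ 2) := by ring

variable (A : H → H) (μ : ℝ) (z : H)

/-- `frbLyapunov A μ z (v n) (v (n - 1))` is `s_n`. -/
noncomputable def frbLyapunov (x x' : H) : ℝ :=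
  1 / 2 * ‖z - x‖ ^ 2 + μ * ⟪A x - A x', z - x⟫ + 1 / 4 * ‖x - x'‖ ^ 2

variable {A μ z} {L : ℝ}

lemma frbLyapunov_nonneg (hμ : 0 ≤ μ) (hL : 0 ≤ L) (hμL : μ * L ≤ 1 / 2)
    (hlip : ∀ x y, ‖A x - A y‖ ≤ L * ‖x - y‖) (x x' : H) : 0 ≤ frbLyapunov A μ z x x' := by
  have := neg_mul_inner_le_of_norm_le (c := z - x) hμ hL (hlip x x')
  unfold frbLyapunov
  nlinarith [sq_nonneg ‖x - x'‖, sq_nonneg ‖z - x‖]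

lemma le_frbLyapunov_sub_frbLyapunov {B : H → Set H} {δ : ℝ} {x₀ x₁ x₂ : H} (hμ : 0 < μ)
    (hδ : 0 ≤ δ) (hL : 0 ≤ L) (hμL : μ * L ≤ (1 - 2 * δ) / 2) (hA : ∀ x y, 0 ≤ ⟪A x - A y, x - y⟫)
    (hlip : ∀ x y, ‖A x - A y‖ ≤ L * ‖x - y‖)
    (hB : ∀ x y u w, u ∈ B x → w ∈ B y → 0 ≤ ⟪u - w, x - y⟫) (hz : -A z ∈ B z)
    (hx₂ : (1 / μ) • (x₁ - μ • ((2 : ℝ) • A x₁ - A x₀) - x₂) ∈ B x₂) :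
    δ / 2 * ‖x₂ - x₁‖ ^ 2 ≤ frbLyapunov A μ z x₁ x₀ - frbLyapunov A μ z x₂ x₁ := by
  have hstep : 0 ≤ ⟪x₁ - x₂ - μ • ((2 : ℝ) • A x₁ - A x₀ - A z), x₂ - z⟫ := by
    have h : x₁ - x₂ - μ • ((2 : ℝ) • A x₁ - A x₀ - A z)
        = μ • ((1 / μ) • (x₁ - μ • ((2 : ℝ) • A x₁ - A x₀) - x₂) - -A z) := by
      rw [smul_sub μ _ (-A z), smul_smul, mul_one_div_cancel hμ.ne', one_smul]
      module
    rw [h, real_inner_smul_left]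
    exact mul_nonneg hμ.le (hB _ _ _ _ hx₂ hz)
  -- `2Ax₁ - Ax₀ - Az = (Ax₂ - Az) + (Ax₁ - Ax₀) - (Ax₂ - Ax₁)`, `x₂ - z = (x₁ - z) + (x₂ - x₁)`
  have hexpand : ⟪x₁ - x₂ - μ • ((2 : ℝ) • A x₁ - A x₀ - A z), x₂ - z⟫
      = ⟪x₂ - x₁, z - x₂⟫ - μ * ⟪A x₂ - A z, x₂ - z⟫ + μ * ⟪A x₁ - A x₀, z - x₁⟫
        - μ * ⟪A x₁ - A x₀, x₂ - x₁⟫ - μ * ⟪A x₂ - A x₁, z - x₂⟫ := by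
    simp only [inner_sub_left, inner_sub_right, real_inner_smul_left]
    ring
  have hpolar : ‖z - x₁‖ ^ 2 = ‖x₂ - x₁‖ ^ 2 + 2 * ⟪x₂ - x₁, z - x₂⟫ + ‖z - x₂‖ ^ 2 := by
    rw [← norm_add_sq_real, sub_add_sub_cancel']
  have hmono := mul_nonneg hμ.le (hA x₂ z)
  have hcross := neg_mul_inner_le_of_norm_le (c := x₂ - x₁) hμ.le hL (hlip x₁ x₀)
  have hμL' := mul_le_mul_of_nonneg_right hμL
    (by positivity : 0 ≤ ‖x₁ - x₀‖ ^ 2 + ‖x₂ - x₁‖ ^ 2)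
  have hδ' := mul_nonneg hδ (sq_nonneg ‖x₁ - x₀‖)
  unfold frbLyapunov
  linarith

end ForwardReflectedBackward

theorem sublinear_rate_general
    {H : Type*} [NormedAddCommGroup H] [InnerProductSpace ℝ H]
    (A : H → H) (B : H → Set H) (L δ μ : ℝ)
    (hδ0 : 0 < δ) (hL : 0 < L)
    (hμl : δ ≤ μ) (hμu : μ ≤ (1 - 2 * δ) / (2 * L))
    (hA : ∀ x y : H, 0 ≤ (inner ℝ (A x - A y) (x - y) : ℝ))
    (hlip : ∀ x y : H, ‖A x - A y‖ ≤ L * ‖x - y‖)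
    (hBmono : ∀ x y u w : H, u ∈ B x → w ∈ B y → 0 ≤ (inner ℝ (u - w) (x - y) : ℝ))
    (z : H) (hz : -A z ∈ B z)
    (v : ℕ → H)
    (hres : ∀ n, 1 ≤ n →
      (1 / μ) • (v n - μ • ((2 : ℝ) • A (v n) - A (v (n - 1))) - v (n + 1)) ∈ B (v (n + 1))) :
    (∀ n, 1 ≤ n →
      ∑ j ∈ Finset.Icc 1 n, ‖v (j + 1) - v j‖ ^ 2 ≤
        (2 / δ) * ((1 / 2) * ‖z - v 1‖ ^ 2
          + μ * (inner ℝ (A (v 1) - A (v 0)) (z - v 1) : ℝ)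
          + (1 / 4) * ‖v 1 - v 0‖ ^ 2)) ∧
      ∃ C : ℝ, ∀ n : ℕ, 1 ≤ n →
        ∃ j, 1 ≤ j ∧ j ≤ n ∧ ‖v (j + 1) - v j‖ ≤ C / Real.sqrt n := by
  have hμ : 0 < μ := hδ0.trans_le hμl
  have hμL : μ * L ≤ (1 - 2 * δ) / 2 := by
    rw [le_div_iff₀ (by positivity)] at hμu
    linarith
  set s : ℕ → ℝ := fun n => frbLyapunov A μ z (v n) (v (n - 1))
  have hsum (n : ℕ) (hn : 1 ≤ n) : ∑ j ∈ Icc 1 n, ‖v (j + 1) - v j‖ ^ 2 ≤ 2 / δ * s 1 := by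
    have hdecr := sum_Icc_le_sub_of_le_sub (s := s) hn fun j hj =>
      le_frbLyapunov_sub_frbLyapunov hμ hδ0.le hL.le hμL hA hlip hBmono hz
        (hres j (mem_Icc.1 hj).1)
    have hlast : 0 ≤ s (n + 1) := frbLyapunov_nonneg hμ.le hL.le (by linarith) hlip _ _
    rw [← mul_sum] at hdecr
    rw [div_mul_eq_mul_div, le_div_iff₀ hδ0]
    linarith
  refine ⟨hsum, √(2 / δ * s 1), fun n hn => ?_⟩
  obtain ⟨j, hj, hle⟩ := exists_le_sqrt_div_of_sum_sq_le (nonempty_Icc.2 hn) (hsum n hn)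
  rw [Nat.card_Icc, Nat.add_sub_cancel] at hle
  exact ⟨j, (mem_Icc.1 hj).1, (mem_Icc.1 hj).2, hle⟩

/-- Theorem 4.10 specialized to Hilbert space: sublinear rate of convergence. -/
theorem sublinear_rate
    {H : Type*} [NormedAddCommGroup H] [InnerProductSpace ℝ H]
    (A : H → H) (B : H → Set H) (L δ μ : ℝ)
    (hδ0 : 0 < δ) (hδ1 : δ < 1 / 2) (hL : 0 < L)
    (hμl : δ ≤ μ) (hμu : μ ≤ (1 - 2 * δ) / (2 * L))
    (hA : ∀ x y : H, 0 ≤ (inner ℝ (A x - A y) (x - y) : ℝ))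
    (hlip : ∀ x y : H, ‖A x - A y‖ ≤ L * ‖x - y‖)
    (hBmono : ∀ x y u w : H, u ∈ B x → w ∈ B y → 0 ≤ (inner ℝ (u - w) (x - y) : ℝ))
    (hBmax : ∀ x u : H, (∀ y w : H, w ∈ B y → 0 ≤ (inner ℝ (u - w) (x - y) : ℝ)) → u ∈ B x)
    (z : H) (hz : -A z ∈ B z)
    (v : ℕ → H)
    (hres : ∀ n, 1 ≤ n →
      (1 / μ) • (v n - μ • ((2 : ℝ) • A (v n) - A (v (n - 1))) - v (n + 1)) ∈ B (v (n + 1))) :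
    (∀ n, 1 ≤ n →
      ∑ j ∈ Finset.Icc 1 n, ‖v (j + 1) - v j‖ ^ 2 ≤
        (2 / δ) * ((1 / 2) * ‖z - v 1‖ ^ 2
          + μ * (inner ℝ (A (v 1) - A (v 0)) (z - v 1) : ℝ)
          + (1 / 4) * ‖v 1 - v 0‖ ^ 2)) ∧
      ∃ C : ℝ, ∀ n : ℕ, 1 ≤ n →
        ∃ j, 1 ≤ j ∧ j ≤ n ∧ ‖v (j + 1) - v j‖ ≤ C / Real.sqrt n :=
  sublinear_rate_general A B L δ μ hδ0 hL hμl hμu hA hlip hBmono z hz v hres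
end

section
/- Let H be a real Hilbert space, A : H → H τ-strongly monotone and L-Lipschitz, B : H → 2^H maximal monotone with (A+B)⁻¹(0) ≠ ∅, and μ ∈ [δ, (1-2δ)/(2L)], δ ∈ (0,1/2). Then the sequence v_{n+1} = (I+μB)⁻¹(v_n - μ(2Av_n - Av_{n-1})) converges strongly (in norm) to the unique u ∈ (A+B)⁻¹(0). -/
/-!
The iteration is forward-reflected-backward splitting. Relative to the zero `u` of `A + B`, the
energy `‖vₙ - u‖² - 2μ⟪A vₙ - A vₙ₋₁, vₙ - u⟫ + μL‖vₙ - vₙ₋₁‖²` is nonnegative when `μL ≤ 1`, and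
monotonicity of `B` at the resolvent step together with the Lipschitz bound shows that it drops by
at least `2τμ‖vₙ₊₁ - u‖²` per step once `2μL ≤ 1`. Telescoping makes `∑ ‖vₙ - u‖²` finite,
so `vₙ → u` in norm.
-/

open Filter

section

variable {H : Type*} [NormedAddCommGroup H] [InnerProductSpace ℝ H]

theorem eq_of_neg_mem_of_strongly_monotone {A : H → H} {B : H → Set H} {τ : ℝ} (hτ : 0 < τ)
    (hA : ∀ x y : H, τ * ‖x - y‖ ^ 2 ≤ inner ℝ (A x - A y) (x - y))
    (hB : ∀ x y u w : H, u ∈ B x → w ∈ B y → 0 ≤ inner ℝ (u - w) (x - y))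
    {w u : H} (hw : -A w ∈ B w) (hu : -A u ∈ B u) : w = u := by
  have hB' : 0 ≤ inner ℝ (-A w - -A u) (w - u) := hB w u _ _ hw hu
  rw [neg_sub_neg, ← neg_sub, inner_neg_left, neg_nonneg] at hB'
  have hsq : ‖w - u‖ ^ 2 ≤ 0 := nonpos_of_mul_nonpos_right ((hA w u).trans hB') hτ
  rw [← sub_eq_zero, ← norm_eq_zero]
  exact pow_eq_zero_iff two_ne_zero |>.mp (le_antisymm hsq (sq_nonneg _))

theorem inner_resolvent_sub_nonneg {B : H → Set H}
    (hB : ∀ x y u w : H, u ∈ B x → w ∈ B y → 0 ≤ inner ℝ (u - w) (x - y))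
    {μ : ℝ} (hμ : 0 < μ) {x q u w : H} (hq : (1 / μ) • (x - q) ∈ B q) (hw : w ∈ B u) :
    0 ≤ inner ℝ (x - q - μ • w) (q - u) := by
  have h : x - q - μ • w = μ • ((1 / μ) • (x - q) - w) := by
    rw [smul_sub, smul_smul, mul_one_div_cancel hμ.ne', one_smul]
  rw [h, real_inner_smul_left]
  exact mul_nonneg hμ.le (hB q u _ _ hq hw)

theorem abs_inner_sub_le_of_lipschitz {A : H → H} {L : ℝ} (hL : 0 ≤ L)
    (hlip : ∀ x y : H, ‖A x - A y‖ ≤ L * ‖x - y‖) (x y z : H) :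
    |inner ℝ (A x - A y) z| ≤ L / 2 * (‖x - y‖ ^ 2 + ‖z‖ ^ 2) := by
  have hcs : |inner ℝ (A x - A y) z| ≤ L * ‖x - y‖ * ‖z‖ :=
    (abs_real_inner_le_norm _ _).trans
      (mul_le_mul_of_nonneg_right (hlip x y) (norm_nonneg _))
  nlinarith [two_mul_le_add_sq ‖x - y‖ ‖z‖]

theorem summable_of_le_sub_succ {f g : ℕ → ℝ} (hf : ∀ n, 0 ≤ f n) (hg : ∀ n, 0 ≤ g n)
    (h : ∀ n, g n ≤ f n - f (n + 1)) : Summable g :=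
  summable_of_sum_range_le hg fun N =>
    calc ∑ i ∈ Finset.range N, g i ≤ ∑ i ∈ Finset.range N, (f i - f (i + 1)) :=
          Finset.sum_le_sum fun i _ => h i
      _ = f 0 - f N := Finset.sum_range_sub' f N
      _ ≤ f 0 := sub_le_self _ (hf N)

def frbEnergy (A : H → H) (μ L : ℝ) (u x y : H) : ℝ :=
  ‖x - u‖ ^ 2 - 2 * μ * inner ℝ (A x - A y) (x - u) + μ * L * ‖x - y‖ ^ 2

theorem frbEnergy_nonneg {A : H → H} {μ L : ℝ} (hμ : 0 ≤ μ) (hL : 0 ≤ L) (hμL : μ * L ≤ 1)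
    (hlip : ∀ x y : H, ‖A x - A y‖ ≤ L * ‖x - y‖) (u x y : H) :
    0 ≤ frbEnergy A μ L u x y := by
  have hlip' := mul_le_mul_of_nonneg_left
    (abs_le.mp (abs_inner_sub_le_of_lipschitz hL hlip x y (x - u))).2 hμ
  have hgap := mul_nonneg (sub_nonneg.mpr hμL) (sq_nonneg ‖x - u‖)
  unfold frbEnergy
  linarith

theorem frbEnergy_add_le {A : H → H} {B : H → Set H} {τ μ L : ℝ}
    (hA : ∀ x y : H, τ * ‖x - y‖ ^ 2 ≤ inner ℝ (A x - A y) (x - y))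
    (hlip : ∀ x y : H, ‖A x - A y‖ ≤ L * ‖x - y‖)
    (hB : ∀ x y u w : H, u ∈ B x → w ∈ B y → 0 ≤ inner ℝ (u - w) (x - y))
    (hμ : 0 < μ) (hL : 0 ≤ L) (hμL : 2 * (μ * L) ≤ 1) {u p q r : H} (hu : -A u ∈ B u)
    (hq : (1 / μ) • (p - μ • ((2 : ℝ) • A p - A r) - q) ∈ B q) :
    frbEnergy A μ L u q p + 2 * τ * μ * ‖q - u‖ ^ 2 ≤ frbEnergy A μ L u p r := by
  have hres := inner_resolvent_sub_nonneg hB hμ hq hu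
  -- strong monotonicity controls `A q - A u`, `A q - A p` enters the new energy, and `A p - A r`
  -- gives the old energy term plus a remainder paid for by the Lipschitz bound
  have hvec : p - μ • ((2 : ℝ) • A p - A r) - q - μ • -A u
      = (p - q) - μ • ((A q - A u) - (A q - A p) + (A p - A r)) := by module
  have hsplit : inner ℝ (A p - A r) (q - u)
      = inner ℝ (A p - A r) (q - p) + inner ℝ (A p - A r) (p - u) := by
    rw [← inner_add_right, sub_add_sub_cancel]
  rw [hvec] at hres
  rw [inner_sub_left, real_inner_smul_left, inner_add_left,
    inner_sub_left (A q - A u) (A q - A p), hsplit] at hres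
  have hpolar : ‖p - u‖ ^ 2 = ‖p - q‖ ^ 2 + 2 * inner ℝ (p - q) (q - u) + ‖q - u‖ ^ 2 := by
    rw [← norm_add_sq_real, sub_add_sub_cancel]
  rw [norm_sub_rev p q] at hpolar
  have hstrong := mul_le_mul_of_nonneg_left (hA q u) hμ.le
  have hlip' := mul_le_mul_of_nonneg_left
    (abs_le.mp (abs_inner_sub_le_of_lipschitz hL hlip p r (q - p))).1 hμ.le
  have hgap := mul_nonneg (sub_nonneg.mpr hμL) (sq_nonneg ‖q - p‖)
  unfold frbEnergy
  linarith

end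

theorem strong_convergence_strongly_monotone_A_general
    {H : Type*} [NormedAddCommGroup H] [InnerProductSpace ℝ H]
    (A : H → H) (B : H → Set H) (τ L δ μ : ℝ)
    (hτ : 0 < τ) (hδ0 : 0 < δ) (hL : 0 < L)
    (hμl : δ ≤ μ) (hμu : μ ≤ (1 - 2 * δ) / (2 * L))
    (hA : ∀ x y : H, τ * ‖x - y‖ ^ 2 ≤ (inner ℝ (A x - A y) (x - y) : ℝ))
    (hlip : ∀ x y : H, ‖A x - A y‖ ≤ L * ‖x - y‖)
    (hBmono : ∀ x y u w : H, u ∈ B x → w ∈ B y → 0 ≤ (inner ℝ (u - w) (x - y) : ℝ))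
    (hzero : ∃ z : H, -A z ∈ B z)
    (v : ℕ → H)
    (hres : ∀ n, 1 ≤ n →
      (1 / μ) • (v n - μ • ((2 : ℝ) • A (v n) - A (v (n - 1))) - v (n + 1)) ∈ B (v (n + 1))) :
    ∃ u : H, -A u ∈ B u ∧ (∀ w : H, -A w ∈ B w → w = u) ∧
      Tendsto v atTop (nhds u) := by
  obtain ⟨u, hu⟩ := hzero
  refine ⟨u, hu, fun w hw => eq_of_neg_mem_of_strongly_monotone hτ hA hBmono hw hu, ?_⟩
  have hμ : 0 < μ := hδ0.trans_le hμl
  have hμL : 2 * (μ * L) ≤ 1 := by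
    have := (le_div_iff₀ (by positivity : (0 : ℝ) < 2 * L)).mp hμu
    linarith
  set E : ℕ → ℝ := fun k => frbEnergy A μ L u (v (k + 1)) (v k)
  have hdescent : ∀ k, 2 * τ * μ * ‖v (k + 2) - u‖ ^ 2 ≤ E k - E (k + 1) := fun k => by
    have hstep :=
      frbEnergy_add_le hA hlip hBmono hμ hL.le hμL hu (hres (k + 1) (Nat.le_add_left 1 k))
    simp only [Nat.add_sub_cancel] at hstep
    linarith
  have hsummable : Summable fun k => 2 * τ * μ * ‖v (k + 2) - u‖ ^ 2 :=
    summable_of_le_sub_succ (fun k => frbEnergy_nonneg hμ.le hL.le (by linarith) hlip _ _ _)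
      (fun k => by positivity) hdescent
  have hsq : Tendsto (fun n => ‖v n - u‖ ^ 2) atTop (nhds 0) :=
    (tendsto_add_atTop_iff_nat 2).mp
      ((summable_mul_left_iff (by positivity)).mp hsummable).tendsto_atTop_zero
  exact tendsto_iff_norm_sub_tendsto_zero.mpr (by simpa using hsq.sqrt)

/-- Theorem 4.15 specialized to Hilbert space: strong convergence when `A` is
`τ`-strongly monotone and `L`-Lipschitz. -/
theorem strong_convergence_strongly_monotone_A
    {H : Type*} [NormedAddCommGroup H] [InnerProductSpace ℝ H] [CompleteSpace H]
    (A : H → H) (B : H → Set H) (τ L δ μ : ℝ)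
    (hτ : 0 < τ) (hδ0 : 0 < δ) (hδ1 : δ < 1 / 2) (hL : 0 < L)
    (hμl : δ ≤ μ) (hμu : μ ≤ (1 - 2 * δ) / (2 * L))
    (hA : ∀ x y : H, τ * ‖x - y‖ ^ 2 ≤ (inner ℝ (A x - A y) (x - y) : ℝ))
    (hlip : ∀ x y : H, ‖A x - A y‖ ≤ L * ‖x - y‖)
    (hBmono : ∀ x y u w : H, u ∈ B x → w ∈ B y → 0 ≤ (inner ℝ (u - w) (x - y) : ℝ))
    (hBmax : ∀ x u : H, (∀ y w : H, w ∈ B y → 0 ≤ (inner ℝ (u - w) (x - y) : ℝ)) → u ∈ B x)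
    (hzero : ∃ z : H, -A z ∈ B z)
    (v : ℕ → H)
    (hres : ∀ n, 1 ≤ n →
      (1 / μ) • (v n - μ • ((2 : ℝ) • A (v n) - A (v (n - 1))) - v (n + 1)) ∈ B (v (n + 1))) :
    ∃ u : H, -A u ∈ B u ∧ (∀ w : H, -A w ∈ B w → w = u) ∧
      Tendsto v atTop (nhds u) :=
  strong_convergence_strongly_monotone_A_general A B τ L δ μ hτ hδ0 hL hμl hμu hA hlip hBmono hzero
    v hres
end
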